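/- If A ∈ M_{m×n} with m ≤ n and p_0 ≠ 0, where p(x) = x^m + p_{m-1}x^{m-1} + ⋯ + p_0 is the characteristic polynomial of Π_A = A·Ψ_{n×m}, then B := −(1/p_0)[A^{⟨m-1⟩} + p_{m-1}A^{⟨m-2⟩} + ⋯ + p_2·A + p_1·(Ψ_{m×n}Ψ_{n×m})^{-1}Ψ_{m×n}] satisfies B ⊛ A ⊛ I_m = I_m (assuming Ψ_{m×n}Ψ_{n×m} is invertible). -/
import Mathlib


open Matrix Kronecker Finset

noncomputable section

/-- The all-ones column vector of length `k`, viewed as a `k × 1` matrix. -/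
def onesCol (k : ℕ) : Matrix (Fin k) (Fin 1) ℝ := Matrix.of fun _ _ => 1

/-- `A ⊗ 1ᵀ_α`, reindexed to an ordinary `Fin`-indexed matrix. -/
def rightExpand {m n : ℕ} (A : Matrix (Fin m) (Fin n) ℝ) (α : ℕ) :
    Matrix (Fin m) (Fin (n * α)) ℝ :=
  Matrix.reindex (Equiv.prodUnique (Fin m) (Fin 1)) finProdFinEquiv (A ⊗ₖ (onesCol α)ᵀ)

/-- `B ⊗ 1_β`, reindexed to an ordinary `Fin`-indexed matrix. -/
def leftExpand {p q : ℕ} (B : Matrix (Fin p) (Fin q) ℝ) (β : ℕ) :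
    Matrix (Fin (p * β)) (Fin q) ℝ :=
  Matrix.reindex finProdFinEquiv (Equiv.prodUnique (Fin q) (Fin 1)) (B ⊗ₖ onesCol β)

theorem dk_dim_eq (n p : ℕ) :
    n * (Nat.lcm n p / n) = p * (Nat.lcm n p / p) := by
  rw [Nat.mul_div_cancel' (Nat.dvd_lcm_left n p),
    Nat.mul_div_cancel' (Nat.dvd_lcm_right n p)]

/-- The dimension keeping semi-tensor product (DK-STP)
`A ⊛ B := (A ⊗ 1ᵀ_{t/n})(B ⊗ 1_{t/p})`, `t = lcm(n,p)`. -/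
def dkstp {m n p q : ℕ} (A : Matrix (Fin m) (Fin n) ℝ) (B : Matrix (Fin p) (Fin q) ℝ) :
    Matrix (Fin m) (Fin q) ℝ :=
  rightExpand A (Nat.lcm n p / n) *
    (leftExpand B (Nat.lcm n p / p)).submatrix (Fin.cast (dk_dim_eq n p)) id

infixl:70 " ⊛ " => dkstp

/-- The bridge matrix `Ψ_{n×p} := (I_n ⊗ 1ᵀ_{t/n})(I_p ⊗ 1_{t/p})`. -/
def bridge (n p : ℕ) : Matrix (Fin n) (Fin p) ℝ :=
  (1 : Matrix (Fin n) (Fin n) ℝ) ⊛ (1 : Matrix (Fin p) (Fin p) ℝ)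

/-- `x ⊗ 1_α`, as a vector of length `m * α`. -/
def vecExpand {m : ℕ} (x : Fin m → ℝ) (α : ℕ) : Fin (m * α) → ℝ :=
  fun i => x (finProdFinEquiv.symm i).1

/-- The VV-STP `x ⊙ y := (x ⊗ 1_{t/m})ᵀ(y ⊗ 1_{t/n})`, `t = lcm(m,n)`. -/
def vvstp {m n : ℕ} (x : Fin m → ℝ) (y : Fin n → ℝ) : ℝ :=
  vecExpand x (Nat.lcm m n / m) ⬝ᵥ
    fun i => vecExpand y (Nat.lcm m n / n) (Fin.cast (dk_dim_eq m n) i)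


lemma rightExpand_apply {m n : ℕ} (A : Matrix (Fin m) (Fin n) ℝ) (α : ℕ)
    (i : Fin m) (j : Fin (n * α)) :
    rightExpand A α i j = A i (finProdFinEquiv.symm j).1 := by
  simp [rightExpand, onesCol]

lemma leftExpand_apply {p q : ℕ} (B : Matrix (Fin p) (Fin q) ℝ) (β : ℕ)
    (i : Fin (p * β)) (j : Fin q) :
    leftExpand B β i j = B (finProdFinEquiv.symm i).1 j := by
  simp [leftExpand, onesCol]

lemma rightExpand_eq {m n : ℕ} (A : Matrix (Fin m) (Fin n) ℝ) (α : ℕ) :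
    rightExpand A α = A * rightExpand (1 : Matrix (Fin n) (Fin n) ℝ) α := by
  ext i j
  simp [mul_apply, rightExpand_apply, one_apply]

lemma leftExpand_eq {p q : ℕ} (B : Matrix (Fin p) (Fin q) ℝ) (β : ℕ) :
    leftExpand B β = leftExpand (1 : Matrix (Fin p) (Fin p) ℝ) β * B := by
  ext i j
  simp [mul_apply, leftExpand_apply, one_apply]

lemma dkstp_eq {m n p q : ℕ} (A : Matrix (Fin m) (Fin n) ℝ) (B : Matrix (Fin p) (Fin q) ℝ) :
    A ⊛ B = A * bridge n p * B := by
  have hsub : ∀ (M : Matrix (Fin (p * (Nat.lcm n p / p))) (Fin p) ℝ),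
      (M * B).submatrix (Fin.cast (dk_dim_eq n p)) id
        = M.submatrix (Fin.cast (dk_dim_eq n p)) id * B := by
    intro M; ext i j; simp [mul_apply, submatrix_apply]
  unfold bridge dkstp
  rw [rightExpand_eq A, leftExpand_eq B, hsub]
  simp only [Matrix.mul_assoc]

/-- DK-STP powers: `dkpow A k = A^{⟨k+1⟩}`, i.e. `dkpow A 0 = A` and
`dkpow A (k+1) = A ⊛ dkpow A k`. -/
def dkpow {m n : ℕ} (A : Matrix (Fin m) (Fin n) ℝ) : ℕ → Matrix (Fin m) (Fin n) ℝ
  | 0 => A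
  | k + 1 => A ⊛ dkpow A k

lemma dkpow_eq {m n : ℕ} (A : Matrix (Fin m) (Fin n) ℝ) (k : ℕ) :
    dkpow A k = (A * bridge n m) ^ k * A := by
  induction k with
  | zero => simp [dkpow]
  | succ k ih =>
      rw [dkpow, ih, dkstp_eq, pow_succ']
      simp only [Matrix.mul_assoc]

/-- if `m ≤ n`, `p_0 ≠ 0` (constant coefficient of the characteristic
polynomial of `Π_A = A Ψ_{n×m}`), and `Ψ_{m×n} Ψ_{n×m}` is invertible, then
`B := -(1/p_0)[A^{⟨m-1⟩} + p_{m-1} A^{⟨m-2⟩} + ⋯ + p_2 A + p_1 (Ψ_{m×n}Ψ_{n×m})⁻¹ Ψ_{m×n}]`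
satisfies `B ⊛ A ⊛ I_m = I_m` (here `dkpow A (k-2) = A^{⟨k-1⟩}` and `p_m = 1`). -/
theorem stmt17 {m n : ℕ} (hmn : m ≤ n) (A : Matrix (Fin m) (Fin n) ℝ)
    (h0 : (A * bridge n m).charpoly.coeff 0 ≠ 0)
    (hinv : IsUnit (bridge m n * bridge n m)) :
    dkstp
      (dkstp
        ((-((A * bridge n m).charpoly.coeff 0)⁻¹) •
          ((∑ k ∈ Finset.Icc 2 m, (A * bridge n m).charpoly.coeff k • dkpow A (k - 2)) +
            (A * bridge n m).charpoly.coeff 1 • ((bridge m n * bridge n m)⁻¹ * bridge m n)))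
        A)
      (1 : Matrix (Fin m) (Fin m) ℝ) = 1 := by
  rcases Nat.eq_zero_or_pos m with hm | hm
  · subst hm; ext i; exact i.elim0
  set P := A * bridge n m with hP
  set p := P.charpoly with hp
  set Ψ := bridge n m
  set Ψ' := bridge m n
  -- the inverse cancels
  have hcan : (Ψ' * Ψ)⁻¹ * Ψ' * Ψ = 1 := by
    rw [Matrix.mul_assoc]
    exact Matrix.nonsing_inv_mul _ ((Matrix.isUnit_iff_isUnit_det _).mp hinv)
  -- Cayley–Hamilton expanded
  have hdeg : p.natDegree = m := by
    rw [hp, Matrix.charpoly_natDegree_eq_dim]; simp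
  have hCH : ∑ i ∈ Finset.range (m + 1), p.coeff i • P ^ i = 0 := by
    have := Matrix.aeval_self_charpoly P
    rwa [Polynomial.aeval_eq_sum_range, hdeg] at this
  have hsplit : Finset.range (m + 1) = insert 0 (Finset.Icc 1 m) := by
    ext x; simp [Nat.lt_succ_iff]; omega
  have h1 : ∑ i ∈ Finset.Icc 1 m, p.coeff i • P ^ i = -(p.coeff 0 • 1) := by
    rw [hsplit, Finset.sum_insert (by simp)] at hCH
    simp only [pow_zero] at hCH
    exact eq_neg_of_add_eq_zero_right hCH
  have hsplit2 : Finset.Icc 1 m = insert 1 (Finset.Icc 2 m) := by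
    ext x; simp; omega
  rw [hsplit2, Finset.sum_insert (by simp), pow_one] at h1
  rw [dkstp_eq, dkstp_eq, Matrix.mul_one]
  simp only [Matrix.smul_mul, Matrix.add_mul, Matrix.sum_mul]
  have hterm : ∀ k ∈ Finset.Icc 2 m,
      p.coeff k • (dkpow A (k - 2) * Ψ * A * Ψ) = p.coeff k • P ^ k := by
    intro k hk
    simp only [Finset.mem_Icc] at hk
    rw [dkpow_eq]
    congr 1
    have e1 : (A * bridge n m) ^ (k - 2) * A * Ψ * A * Ψ
        = P ^ (k - 2) * P * P := by
      rw [Matrix.mul_assoc ((A * bridge n m) ^ (k - 2) * A * Ψ) A Ψ, ← hP,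
        Matrix.mul_assoc ((A * bridge n m) ^ (k - 2)) A Ψ, ← hP]
    rw [e1, ← pow_succ, ← pow_succ]
    congr 1
    omega
  rw [Finset.sum_congr rfl hterm, hcan, Matrix.one_mul, ← hP]
  rw [add_comm, h1, smul_neg, neg_smul, neg_neg, smul_smul, inv_mul_cancel₀ h0, one_smul]
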